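/- Let p be an odd prime, N ≥ 1, and let H ∈ M_N(ℚ_p) be symmetric (H = Hᵗ). Then there exists A ∈ GL_N(ℤ_p) (i.e., A ∈ M_N(ℤ_p) with det(A) a p-adic unit) such that Aᵗ·H·A is a diagonal matrix. -/

import Mathlib

/-!
Work over any field with an ultrametric norm in which `‖2‖ = 1`. Take an entry of `H` of maximal
norm. If no diagonal entry attains this norm, say the maximum is at `(i, j)`, then replacing `e_i`
by `e_i + e_j` produces the diagonal entry `H i i + H j j + 2 H i j`, whose norm is the maximum by
the ultrametric inequality. Once a diagonal pivot has maximal norm, the other entries of its row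
divided by the pivot are integral, so a single integral column operation clears that row and
column, and induction on the complementary block finishes the proof.
-/

open Matrix

namespace Matrix

variable {K : Type*} [NormedField K] {n : Type*} [Fintype n] [DecidableEq n]

/-- `A` lies in `GL_n` of the ring of integers `{x | ‖x‖ ≤ 1}`. -/
def IsIntegralUnimodular (A : Matrix n n K) : Prop :=
  (∀ i j, ‖A i j‖ ≤ 1) ∧ ‖A.det‖ = 1

def IsIntegrallyDiagonalizable (H : Matrix n n K) : Prop :=
  ∃ A : Matrix n n K, A.IsIntegralUnimodular ∧ (Aᵀ * H * A).IsDiag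

namespace IsIntegralUnimodular

lemma one : (1 : Matrix n n K).IsIntegralUnimodular :=
  ⟨fun i j => by rw [one_apply]; split_ifs <;> simp, by simp⟩

lemma submatrix {m : Type*} [Fintype m] [DecidableEq m] {A : Matrix n n K}
    (hA : A.IsIntegralUnimodular) (e : m ≃ n) : (A.submatrix e e).IsIntegralUnimodular :=
  ⟨fun i j => hA.1 (e i) (e j), by rw [det_submatrix_equiv_self, hA.2]⟩

lemma fromBlocks_zero {m : Type*} [Fintype m] [DecidableEq m] {A : Matrix m m K}
    {D : Matrix n n K} (hA : A.IsIntegralUnimodular) (hD : D.IsIntegralUnimodular) :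
    (fromBlocks A 0 0 D).IsIntegralUnimodular :=
  ⟨fun i j => by rcases i with i | i <;> rcases j with j | j <;> simp [hA.1, hD.1],
    by rw [det_fromBlocks_zero₂₁, norm_mul, hA.2, hD.2, one_mul]⟩

end IsIntegralUnimodular

omit [Fintype n] in
lemma transpose_transvection (i j : n) (c : K) : (transvection i j c)ᵀ = transvection j i c := by
  simp [transvection, transpose_add, transpose_single]

lemma isIntegralUnimodular_transvection {i j : n} (hij : i ≠ j) {c : K} (hc : ‖c‖ ≤ 1) :
    (transvection i j c).IsIntegralUnimodular := by
  refine ⟨fun k l => ?_, by rw [det_transvection_of_ne _ _ hij, norm_one]⟩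
  by_cases hkl : i = k ∧ j = l
  · obtain ⟨rfl, rfl⟩ := hkl
    simpa [transvection, hij] using hc
  · rw [transvection, add_apply, single_apply, if_neg hkl, add_zero, one_apply]
    split_ifs <;> simp

lemma transpose_transvection_mul_mul_transvection_apply_self (H : Matrix n n K) (i j : n) :
    ((transvection j i (1 : K))ᵀ * H * transvection j i 1 : Matrix n n K) i i =
      H i i + H i j + H j i + H j j := by
  rw [transpose_transvection, Matrix.mul_assoc, transvection_mul_apply_same,
    mul_transvection_apply_same, mul_transvection_apply_same]
  ring

omit [Fintype n] [DecidableEq n] in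
lemma IsSymm.transpose_mul_mul {α m : Type*} [CommSemiring α] [Fintype n] [Fintype m]
    {H : Matrix n n α} (hH : H.IsSymm) (A : Matrix n m α) : (Aᵀ * H * A).IsSymm := by
  simp only [IsSymm, transpose_mul, transpose_transpose, hH.eq, Matrix.mul_assoc]

namespace IsIntegrallyDiagonalizable

lemma of_isDiag {H : Matrix n n K} (hH : H.IsDiag) : H.IsIntegrallyDiagonalizable :=
  ⟨1, .one, by simpa using hH⟩

lemma submatrix {m : Type*} [Fintype m] [DecidableEq m] {H : Matrix n n K}
    (h : H.IsIntegrallyDiagonalizable) (e : m ≃ n) :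
    (H.submatrix e e).IsIntegrallyDiagonalizable := by
  obtain ⟨A, hA, hdiag⟩ := h
  refine ⟨A.submatrix e e, hA.submatrix e, ?_⟩
  rw [transpose_submatrix, submatrix_mul_equiv, submatrix_mul_equiv]
  exact hdiag.submatrix e.injective

lemma fromBlocks_zero {m : Type*} [Fintype m] [DecidableEq m] {H₁ : Matrix m m K}
    {H₂ : Matrix n n K} (h₁ : H₁.IsIntegrallyDiagonalizable) (h₂ : H₂.IsIntegrallyDiagonalizable) :
    (fromBlocks H₁ 0 0 H₂).IsIntegrallyDiagonalizable := by
  obtain ⟨A₁, hA₁, hdiag₁⟩ := h₁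
  obtain ⟨A₂, hA₂, hdiag₂⟩ := h₂
  refine ⟨fromBlocks A₁ 0 0 A₂, hA₁.fromBlocks_zero hA₂, ?_⟩
  simpa [fromBlocks_transpose, fromBlocks_multiply] using hdiag₁.fromBlocks hdiag₂

lemma of_row_eq_zero {H : Matrix n n K} (hH : H.IsSymm) {i : n} (hrow : ∀ j ≠ i, H i j = 0)
    (h : (H.submatrix ((↑) : {j // j ≠ i} → n) (↑)).IsIntegrallyDiagonalizable) :
    H.IsIntegrallyDiagonalizable := by
  set e := Equiv.sumCompl (· = i)
  have hblocks : H.submatrix e e =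
      fromBlocks (H.submatrix (↑) (↑)) 0 0 (H.submatrix ((↑) : {j // j ≠ i} → n) (↑)) := by
    ext (⟨k, hk⟩ | ⟨k, hk⟩) (⟨l, hl⟩ | ⟨l, hl⟩)
    · rfl
    · subst hk
      exact hrow l hl
    · subst hl
      exact (hH.apply _ k).trans (hrow k hk)
    · rfl
  have := ((of_isDiag (isDiag_of_subsingleton
    (H.submatrix ((↑) : {j // j = i} → n) (↑)))).fromBlocks_zero h).submatrix e.symm
  rwa [← hblocks, submatrix_submatrix, e.self_comp_symm, submatrix_id_id] at this

end IsIntegrallyDiagonalizable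

variable [IsUltrametricDist K]

lemma norm_mul_apply_le {l m o : Type*} [Fintype m] {A : Matrix l m K} {B : Matrix m o K}
    {a b : ℝ} (ha : 0 ≤ a) (hb : 0 ≤ b) (hA : ∀ i k, ‖A i k‖ ≤ a) (hB : ∀ k j, ‖B k j‖ ≤ b)
    (i : l) (j : o) : ‖(A * B) i j‖ ≤ a * b :=
  IsUltrametricDist.norm_sum_le_of_forall_le_of_nonneg (mul_nonneg ha hb) fun k _ =>
    (norm_mul_le _ _).trans (mul_le_mul (hA i k) (hB k j) (norm_nonneg _) ha)

omit [DecidableEq n] in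
lemma norm_transpose_mul_mul_apply_le {A H : Matrix n n K} {c : ℝ} (hc : 0 ≤ c)
    (hA : ∀ i j, ‖A i j‖ ≤ 1) (hH : ∀ i j, ‖H i j‖ ≤ c) (i j : n) :
    ‖(Aᵀ * H * A) i j‖ ≤ c := by
  have hAH := norm_mul_apply_le (A := Aᵀ) zero_le_one hc (fun i j => hA j i) hH
  simpa using norm_mul_apply_le (by simpa using hc) zero_le_one hAH hA i j

lemma IsIntegralUnimodular.mul {A B : Matrix n n K} (hA : A.IsIntegralUnimodular)
    (hB : B.IsIntegralUnimodular) : (A * B).IsIntegralUnimodular :=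
  ⟨fun i j => by simpa using norm_mul_apply_le zero_le_one zero_le_one hA.1 hB.1 i j,
    by rw [det_mul, norm_mul, hA.2, hB.2, one_mul]⟩

lemma IsIntegrallyDiagonalizable.of_conj {A H : Matrix n n K} (hA : A.IsIntegralUnimodular)
    (h : (Aᵀ * H * A).IsIntegrallyDiagonalizable) : H.IsIntegrallyDiagonalizable := by
  obtain ⟨B, hB, hdiag⟩ := h
  refine ⟨A * B, hA.mul hB, ?_⟩
  simpa only [transpose_mul, Matrix.mul_assoc] using hdiag

omit [Fintype n] [DecidableEq n] in
lemma norm_add_add_two_mul_eq (h2 : ‖(2 : K)‖ = 1) {a b c : K} (ha : ‖a‖ < ‖c‖)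
    (hb : ‖b‖ < ‖c‖) : ‖a + b + 2 * c‖ = ‖c‖ := by
  have hc : ‖2 * c‖ = ‖c‖ := by rw [norm_mul, h2, one_mul]
  have hab : ‖a + b‖ < ‖2 * c‖ :=
    hc ▸ (IsUltrametricDist.norm_add_le_max a b).trans_lt (max_lt ha hb)
  rw [IsUltrametricDist.norm_add_eq_max_of_norm_ne_norm hab.ne, max_eq_right hab.le, hc]

lemma exists_isIntegralUnimodular_norm_apply_self_eq (h2 : ‖(2 : K)‖ = 1) {H : Matrix n n K}
    (hH : H.IsSymm) {i j : n} (hmax : ∀ k l, ‖H k l‖ ≤ ‖H i j‖) :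
    ∃ A : Matrix n n K, A.IsIntegralUnimodular ∧ ∃ k, ‖(Aᵀ * H * A) k k‖ = ‖H i j‖ := by
  by_cases hdiag : ∃ k, ‖H k k‖ = ‖H i j‖
  · obtain ⟨k, hk⟩ := hdiag
    exact ⟨1, .one, k, by simpa using hk⟩
  push Not at hdiag
  have hlt k : ‖H k k‖ < ‖H i j‖ := (hmax k k).lt_of_ne (hdiag k)
  have hij : j ≠ i := fun h => (hdiag i) (h ▸ rfl)
  refine ⟨transvection j i 1, isIntegralUnimodular_transvection hij (by simp), i, ?_⟩
  have hval : H i i + H i j + H j i + H j j = H i i + H j j + 2 * H i j := by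
    rw [hH.apply i j]; ring
  rw [transpose_transvection_mul_mul_transvection_apply_self, hval]
  exact norm_add_add_two_mul_eq h2 (hlt i) (hlt j)

lemma exists_isIntegralUnimodular_pivot (h2 : ‖(2 : K)‖ = 1) {H : Matrix n n K} (hH : H.IsSymm)
    (hH0 : H ≠ 0) : ∃ A : Matrix n n K, A.IsIntegralUnimodular ∧
      ∃ i, (Aᵀ * H * A) i i ≠ 0 ∧ ∀ j, ‖(Aᵀ * H * A) i j‖ ≤ ‖(Aᵀ * H * A) i i‖ := by
  obtain ⟨i₀, j₀, h0⟩ : ∃ i j, H i j ≠ 0 := by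
    by_contra! h
    exact hH0 (ext h)
  have : Nonempty (n × n) := ⟨(i₀, j₀)⟩
  obtain ⟨⟨i, j⟩, hmax⟩ := Finite.exists_max fun x : n × n => ‖H x.1 x.2‖
  replace hmax k l : ‖H k l‖ ≤ ‖H i j‖ := hmax (k, l)
  obtain ⟨A, hA, k, hk⟩ := exists_isIntegralUnimodular_norm_apply_self_eq h2 hH hmax
  refine ⟨A, hA, k, ?_, fun l =>
    hk ▸ norm_transpose_mul_mul_apply_le (norm_nonneg _) hA.1 hmax k l⟩
  rw [← norm_ne_zero_iff, hk]
  exact ((norm_pos_iff.2 h0).trans_le (hmax i₀ j₀)).ne'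

lemma exists_isIntegralUnimodular_row_eq_zero {H : Matrix n n K} {i : n} (hi : H i i ≠ 0)
    (hmax : ∀ j, ‖H i j‖ ≤ ‖H i i‖) :
    ∃ C : Matrix n n K, C.IsIntegralUnimodular ∧ ∀ j ≠ i, (Cᵀ * H * C) i j = 0 := by
  set v : n → K := fun j => if j = i then 0 else -(H i j / H i i)
  have hvi : v i = 0 := if_pos rfl
  have hv1 j : ‖v j‖ ≤ 1 := by
    by_cases hj : j = i
    · simp [v, hj]
    · simpa [v, hj, norm_div] using div_le_one_of_le₀ (hmax j) (norm_nonneg _)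
  -- `C = 1 + e_i vᵀ` subtracts `H i j / H i i` times column `i` from column `j`; since `v i = 0`,
  -- row `i` of `Cᵀ` is `e_i`, so `(Cᵀ * H * C) i j = (H * C) i j`.
  refine ⟨1 + vecMulVec (Pi.single i 1) v, ⟨fun k l => ?_, ?_⟩, fun j hj => ?_⟩
  · refine (IsUltrametricDist.norm_add_le_max _ _).trans (max_le ?_ ?_)
    · rw [one_apply]; split_ifs <;> simp
    · rw [vecMulVec_apply, norm_mul]
      exact mul_le_one₀ (by rw [Pi.single_apply]; split_ifs <;> simp) (norm_nonneg _) (hv1 l)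
  · rw [vecMulVec_eq Unit, det_one_add_replicateCol_mul_replicateRow]
    simp [hvi]
  · rw [transpose_add, transpose_one, transpose_vecMulVec, Matrix.mul_assoc, Matrix.add_mul,
      Matrix.one_mul, vecMulVec_mul, add_apply, vecMulVec_apply, hvi, zero_mul, add_zero,
      Matrix.mul_add, Matrix.mul_one, mul_vecMulVec, mulVec_single_one, add_apply,
      vecMulVec_apply, col_apply, show v j = -(H i j / H i i) from if_neg hj, mul_neg,
      mul_div_cancel₀ _ hi, add_neg_cancel]

theorem IsSymm.isIntegrallyDiagonalizable (h2 : ‖(2 : K)‖ = 1) {H : Matrix n n K}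
    (hH : H.IsSymm) : H.IsIntegrallyDiagonalizable := by
  induction hcard : Fintype.card n using Nat.strong_induction_on generalizing n with
  | _ N ih =>
  by_cases hH0 : H = 0
  · exact .of_isDiag (hH0 ▸ isDiag_zero)
  obtain ⟨A, hA, i, hi, hmax⟩ := exists_isIntegralUnimodular_pivot h2 hH hH0
  obtain ⟨C, hC, hrow⟩ := exists_isIntegralUnimodular_row_eq_zero hi hmax
  have hsymm := (hH.transpose_mul_mul A).transpose_mul_mul C
  refine .of_conj hA (.of_conj hC (.of_row_eq_zero hsymm hrow (ih _ ?_ (hsymm.submatrix _) rfl)))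
  exact hcard ▸ Fintype.card_subtype_lt (p := (· ≠ i)) (x := i) (by simp)

end Matrix

lemma Padic.norm_two_eq_one {p : ℕ} [Fact p.Prime] (hp : p ≠ 2) : ‖(2 : ℚ_[p])‖ = 1 := by
  exact_mod_cast Padic.norm_natCast_eq_one_iff.2
    ((Nat.coprime_primes Fact.out Nat.prime_two).2 hp)

theorem symmetric_matrix_uniform_diagonalization_Qp_general
    (p : ℕ) [Fact p.Prime] (hp : p ≠ 2)
    (N : ℕ)
    (H : Matrix (Fin N) (Fin N) ℚ_[p]) (hH : H = Hᵀ) :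
    ∃ A : Matrix (Fin N) (Fin N) ℚ_[p],
      (∀ i j, ‖A i j‖ ≤ 1) ∧ ‖A.det‖ = 1 ∧ (Aᵀ * H * A).IsDiag := by
  obtain ⟨A, ⟨hA, hdet⟩, hdiag⟩ :=
    IsSymm.isIntegrallyDiagonalizable (Padic.norm_two_eq_one hp) hH.symm
  exact ⟨A, hA, hdet, hdiag⟩

/-- Uniform diagonalization over `ℚ_p`, `p` odd: every symmetric matrix
`H ∈ M_N(ℚ_p)` can be diagonalized by a matrix `A` with entries in `ℤ_p`
and determinant a `p`-adic unit. -/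
theorem symmetric_matrix_uniform_diagonalization_Qp
    (p : ℕ) [Fact p.Prime] (hp : p ≠ 2)
    (N : ℕ) (hN : 1 ≤ N)
    (H : Matrix (Fin N) (Fin N) ℚ_[p]) (hH : H = Hᵀ) :
    ∃ A : Matrix (Fin N) (Fin N) ℚ_[p],
      (∀ i j, ‖A i j‖ ≤ 1) ∧ ‖A.det‖ = 1 ∧ (Aᵀ * H * A).IsDiag :=
  symmetric_matrix_uniform_diagonalization_Qp_general p hp N H hH
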